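/- For every n ≥ 5, the minimal unique substrings of the Fibonacci word F_n are exactly the two singular words S_{n-3} and S_{n-2}; moreover, their unique occurrences in F_n are F_n[f_{n-2} .. f_{n-1} − 1] = S_{n-3} and F_n[f_{n-1} .. f_n − 1] = S_{n-2} (1-based positions). -/

import Mathlib

/-- Fibonacci numbers: f 0 = f 1 = 1, f (n+2) = f (n+1) + f n. -/
def fib : ℕ → ℕ
  | 0 => 1
  | 1 => 1
  | n + 2 => fib (n + 1) + fib n

/-- Fibonacci words over {a, b}; `false` encodes `a`, `true` encodes `b`. -/
def F : ℕ → List Bool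
  | 0 => [true]
  | 1 => [false]
  | n + 2 => F (n + 1) ++ F n

/-- Singular words: S 0 = a, S 1 = b, S 2 = S 0 · S₋₁ · S 0 = aa,
and S n = S (n-2) · S (n-3) · S (n-2) for n ≥ 3. -/
def S : ℕ → List Bool
  | 0 => [false]
  | 1 => [true]
  | 2 => [false, false]
  | n + 3 => S (n + 1) ++ S n ++ S (n + 1)

/-- `w` occurs in `T` at (1-based) position `i`, i.e. `w = T[i .. i + |w| - 1]`. -/
def OccursAt {α : Type*} (T w : List α) (i : ℕ) : Prop :=
  1 ≤ i ∧ i + w.length ≤ T.length + 1 ∧ (T.drop (i - 1)).take w.length = w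

/-- `w` is a minimal unique substring (MUS) of `T`: `w` occurs exactly once in `T`,
and every proper substring of `w` occurs at least twice in `T`. -/
def IsMUS {α : Type*} (T w : List α) : Prop :=
  (∃! i : ℕ, OccursAt T w i) ∧
  ∀ v : List α, v <:+: w → v ≠ w →
    ∃ i j : ℕ, i ≠ j ∧ OccursAt T v i ∧ OccursAt T v j

namespace MUSAux
open List

def e (k : ℕ) : Bool := decide (k % 2 = 0)

def Slice {α : Type*} (T : List α) (p ℓ : ℕ) : List α := (T.drop p).take ℓ

def Occ0 {α : Type*} (T w : List α) (p : ℕ) : Prop :=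
  p + w.length ≤ T.length ∧ Slice T p w.length = w

instance {α : Type*} [DecidableEq α] (T w : List α) (p : ℕ) : Decidable (Occ0 T w p) := by
  unfold Occ0; infer_instance

lemma fib_add2 (n : ℕ) : fib (n + 2) = fib (n + 1) + fib n := rfl

lemma fib_pos : ∀ n, 1 ≤ fib n
  | 0 => le_refl 1
  | 1 => le_refl 1
  | n + 2 => by have := fib_pos (n + 1); rw [fib_add2]; omega

lemma F_succ (n : ℕ) : F (n + 2) = F (n + 1) ++ F n := rfl

lemma S_succ (n : ℕ) : S (n + 3) = S (n + 1) ++ S n ++ S (n + 1) := rfl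

lemma lenF : ∀ n, (F n).length = fib n
  | 0 => rfl
  | 1 => rfl
  | n + 2 => by rw [F_succ, length_append, lenF (n+1), lenF n, fib_add2]

lemma lenS : ∀ n, (S n).length = fib n
  | 0 => rfl
  | 1 => rfl
  | 2 => rfl
  | n + 3 => by
      rw [S_succ, length_append, length_append, lenS (n+1), lenS n]
      rw [show fib (n+3) = fib (n+2) + fib (n+1) from rfl, fib_add2]

lemma e_two (k : ℕ) : e (k + 2) = e k := by simp [e, Nat.add_mod_right]

lemma e_ne : ∀ k, e (k + 1) ≠ e k
  | 0 => by decide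
  | k + 1 => by rw [show k+1+1 = k+2 from rfl, e_two]; exact fun h => (e_ne k) h.symm

section SliceLemmas
variable {α : Type*}

lemma slice_append_left (A B : List α) (p ℓ : ℕ) (h : p + ℓ ≤ A.length) :
    Slice (A ++ B) p ℓ = Slice A p ℓ := by
  unfold Slice
  rw [drop_append_of_le_length (by omega), take_append_of_le_length (by simp; omega)]

lemma slice_append_right (A B : List α) (p ℓ : ℕ) :
    Slice (A ++ B) (A.length + p) ℓ = Slice B p ℓ := by
  unfold Slice; rw [drop_append, drop_eq_nil_of_le (by omega)]; simp

lemma slice_len (T : List α) (p ℓ : ℕ) (h : p + ℓ ≤ T.length) :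
    (Slice T p ℓ).length = ℓ := by
  simp [Slice]; omega

lemma slice_slice (T : List α) (p L d ℓ : ℕ) (h : d + ℓ ≤ L) :
    Slice (Slice T p L) d ℓ = Slice T (p + d) ℓ := by
  unfold Slice
  rw [drop_take, drop_drop, take_take]
  rw [min_eq_left (by omega)]

lemma slice_is_infix (T : List α) (p ℓ : ℕ) : Slice T p ℓ <:+: T := by
  refine ⟨T.take p, (T.drop p).drop ℓ, ?_⟩
  unfold Slice
  rw [append_assoc, take_append_drop, take_append_drop]

lemma infix_exists_slice {v w : List α} (h : v <:+: w) :
    ∃ d, d + v.length ≤ w.length ∧ Slice w d v.length = v := by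
  obtain ⟨s, t, rfl⟩ := h
  refine ⟨s.length, by simp, ?_⟩
  rw [append_assoc, show s.length = s.length + 0 from rfl, slice_append_right]
  unfold Slice
  simp [take_left]

lemma occ0_of_slice {T : List α} {p ℓ : ℕ} (h : p + ℓ ≤ T.length) :
    Occ0 T (Slice T p ℓ) p := by
  refine ⟨by rw [slice_len T p ℓ h]; exact h, by rw [slice_len T p ℓ h]⟩

lemma occ0_mono_prefix {A T : List α} {w : List α} {p : ℕ} (h : Occ0 A w p) (hp : A <+: T) :
    Occ0 T w p := by
  obtain ⟨C, rfl⟩ := hp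
  exact ⟨by have := h.1; simp; omega, by rw [slice_append_left A C p w.length h.1]; exact h.2⟩

lemma occ0_restrict {A B : List α} {w : List α} {p : ℕ} (h : Occ0 (A ++ B) w p)
    (hb : p + w.length ≤ A.length) : Occ0 A w p :=
  ⟨hb, by rw [← slice_append_left A B p w.length hb]; exact h.2⟩

lemma occ0_sub {T w : List α} {p : ℕ} (h : Occ0 T w p) (d ℓ : ℕ) (hd : d + ℓ ≤ w.length) :
    Occ0 T (Slice w d ℓ) (p + d) := by
  have hb : p + d + ℓ ≤ T.length := by have := h.1; omega
  have : Slice w d ℓ = Slice T (p + d) ℓ := by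
    rw [← h.2, slice_slice T p w.length d ℓ hd]
  rw [this]
  exact occ0_of_slice hb

lemma occ0_left {T A B : List α} {p : ℕ} (h : Occ0 T (A ++ B) p) : Occ0 T A p := by
  have := occ0_sub h 0 A.length (by simp)
  rw [show Slice (A ++ B) 0 A.length = A from by unfold Slice; simp [take_left]] at this
  simpa using this

lemma occ0_right {T A B : List α} {p : ℕ} (h : Occ0 T (A ++ B) p) : Occ0 T B (p + A.length) := by
  have := occ0_sub h A.length B.length (by simp)
  rw [show Slice (A ++ B) A.length B.length = B from by
    unfold Slice; rw [show A.length = A.length + 0 from rfl, drop_append]; simp] at this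
  exact this

lemma occ0_occursAt {T w : List α} {p : ℕ} (h : Occ0 T w p) : OccursAt T w (p + 1) := by
  exact ⟨by omega, by have := h.1; omega, by simpa [Slice] using h.2⟩

lemma occursAt_occ0 {T w : List α} {i : ℕ} (h : OccursAt T w i) : Occ0 T w (i - 1) := by
  obtain ⟨h1, h2, h3⟩ := h
  exact ⟨by omega, h3⟩

end SliceLemmas

lemma P : ∀ n, S n ++ [e n] = e (n + 1) :: F n
  | 0 => by decide
  | 1 => by decide
  | 2 => by decide
  | n + 3 => by
      have h0 : S n ++ [e n] = e (n + 1) :: F n := P n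
      have h1 : S (n + 1) ++ [e (n + 1)] = e (n + 2) :: F (n + 1) := P (n + 1)
      have ee2 : e (n + 2) = e n := e_two n
      show S (n + 1) ++ S n ++ S (n + 1) ++ [e (n + 3)] = e (n + 4) :: F (n + 3)
      rw [e_two (n + 1), e_two (n + 2),
        show F (n + 3) = F (n + 1) ++ F n ++ F (n + 1) from by
          rw [show F (n+3) = F (n+2) ++ F (n+1) from rfl, F_succ]]
      calc S (n+1) ++ S n ++ S (n+1) ++ [e (n+1)]
          = S (n+1) ++ (S n ++ (S (n+1) ++ [e (n+1)])) := by simp [append_assoc]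
        _ = S (n+1) ++ (S n ++ (e (n+2) :: F (n+1))) := by rw [h1]
        _ = S (n+1) ++ ((S n ++ [e (n+2)]) ++ F (n+1)) := by rw [append_cons]
        _ = S (n+1) ++ ((e (n+1) :: F n) ++ F (n+1)) := by rw [ee2, h0]
        _ = S (n+1) ++ (e (n+1) :: (F n ++ F (n+1))) := by rw [cons_append]
        _ = (S (n+1) ++ [e (n+1)]) ++ (F n ++ F (n+1)) := by rw [append_cons]
        _ = (e (n+2) :: F (n+1)) ++ (F n ++ F (n+1)) := by rw [h1]
        _ = e (n+2) :: (F (n+1) ++ F n ++ F (n+1)) := by simp [append_assoc]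

lemma S_head_tail (n : ℕ) : S n = e (n + 1) :: (S n).tail ∧ F n = (S n).tail ++ [e n] := by
  have h := P n
  have hlen : (S n).length ≠ 0 := by rw [lenS]; have := fib_pos n; omega
  rcases hS : S n with _ | ⟨a, tl⟩
  · rw [hS] at hlen; simp at hlen
  · rw [hS] at h
    rw [cons_append, cons.injEq] at h
    refine ⟨?_, h.2.symm⟩
    rw [h.1]
    rfl

lemma F_eq (n : ℕ) : F n = (S n).tail ++ [e n] := (S_head_tail n).2

lemma tail_S_len (n : ℕ) : (S n).tail.length + 1 = fib n := by
  have := fib_pos n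
  rw [length_tail, lenS]; omega

lemma lastTwoF : ∀ k, ∃ u : List Bool, F (k + 2) = u ++ [e (k + 3), e (k + 2)]
  | 0 => ⟨[], by decide⟩
  | 1 => ⟨[false], by decide⟩
  | k + 2 => by
      obtain ⟨u, hu⟩ := lastTwoF k
      refine ⟨F (k + 3) ++ u, ?_⟩
      show F (k + 4) = F (k + 3) ++ u ++ [e (k + 5), e (k + 4)]
      rw [show F (k + 4) = F (k + 3) ++ F (k + 2) from rfl, hu,
        e_two (k + 3), e_two (k + 2), append_assoc]

lemma S_ne_F (m : ℕ) : S (m + 2) ≠ F (m + 2) := by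
  intro h
  obtain ⟨u, hu⟩ := lastTwoF m
  have hF := F_eq (m + 2)
  have htail : (S (m + 2)).tail = u ++ [e (m + 3)] := by
    have h2 : (S (m + 2)).tail ++ [e (m + 2)] = (u ++ [e (m + 3)]) ++ [e (m + 2)] := by
      rw [← hF, hu, append_assoc]; rfl
    have h3 := congrArg List.dropLast h2
    simpa [dropLast_concat] using h3
  have hS := (S_head_tail (m + 2)).1
  rw [htail] at hS
  have h1 : (S (m + 2)).getLast? = some (e (m + 3)) := by
    rw [hS]
    show ((e (m + 3) :: u) ++ [e (m + 3)]).getLast? = some (e (m + 3))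
    exact getLast?_concat
  have h2 : (F (m + 2)).getLast? = some (e (m + 2)) := by
    rw [hu, show u ++ [e (m+3), e (m+2)] = (u ++ [e (m+3)]) ++ [e (m+2)] from by simp]
    exact getLast?_concat
  rw [h] at h1
  rw [h1] at h2
  exact e_ne (m + 2) (by injection h2)

lemma NC : ∀ k, ∃ D : List Bool,
    F (k + 1) ++ F k = D ++ [e (k + 1), e k] ∧ F k ++ F (k + 1) = D ++ [e k, e (k + 1)]
  | 0 => ⟨[], by decide, by decide⟩
  | k + 1 => by
      obtain ⟨D, h1, h2⟩ := NC k
      refine ⟨F (k + 1) ++ D, ?_, ?_⟩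
      · show F (k + 2) ++ F (k + 1) = F (k + 1) ++ D ++ [e (k + 2), e (k + 1)]
        rw [F_succ, append_assoc, h2, e_two k, append_assoc]
      · show F (k + 1) ++ F (k + 2) = F (k + 1) ++ D ++ [e (k + 1), e (k + 2)]
        rw [F_succ, h1, e_two k, ← append_assoc]

lemma shift (k p ℓ : ℕ) (h : p + ℓ + fib k + 2 ≤ fib (k + 2)) :
    Slice (F (k + 2)) p ℓ = Slice (F (k + 2)) (p + fib k) ℓ := by
  obtain ⟨D, h1, h2⟩ := NC k
  have hD : D.length + 2 = fib (k + 2) := by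
    have h3 := congrArg List.length h1
    simp [lenF] at h3
    rw [fib_add2]; omega
  have hL : Slice (F (k + 2)) p ℓ = Slice (F (k + 1)) p ℓ := by
    rw [F_succ]
    exact slice_append_left _ _ _ _ (by rw [lenF]; rw [fib_add2] at h; have := fib_pos k; omega)
  have hR : Slice (F (k + 2)) (p + fib k) ℓ = Slice (F (k + 1)) p ℓ := by
    rw [F_succ, h1]
    rw [slice_append_left D [e (k+1), e k] (p + fib k) ℓ (by omega)]
    rw [← slice_append_left D [e k, e (k+1)] (p + fib k) ℓ (by omega)]
    rw [← h2]
    rw [show p + fib k = (F k).length + p from by rw [lenF]; omega]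
    rw [slice_append_right]
  rw [hL, hR]

lemma decomp (k : ℕ) : F (k + 3) = (S (k + 1)).tail ++ S k ++ S (k + 1) ++ [e (k + 1)] := by
  have hA : F (k + 3) = (S (k + 1)).tail ++ (e (k + 1) :: (F k ++ F (k + 1))) := by
    rw [show F (k+3) = F (k+2) ++ F (k+1) from rfl, F_succ]
    nth_rewrite 1 [F_eq (k + 1)]
    simp [append_assoc]
  have hB : e (k + 1) :: (F k ++ F (k + 1)) = (S k ++ [e k]) ++ F (k + 1) := by
    rw [← cons_append, ← P k]
  have hC : (S k ++ [e k]) ++ F (k + 1) = S k ++ (S (k + 1) ++ [e (k + 1)]) := by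
    rw [append_assoc, show ([e k] ++ F (k+1) : List Bool) = e (k+2) :: F (k+1) from by
      rw [e_two k]; exact singleton_append, ← P (k + 1)]
  rw [hA, hB, hC]
  try simp [append_assoc]

lemma occ0_middle {α : Type*} (A B C : List α) : Occ0 (A ++ B ++ C) B A.length := by
  constructor
  · simp only [length_append]; omega
  · rw [append_assoc]
    have : Slice (A ++ (B ++ C)) (A.length + 0) B.length = Slice (B ++ C) 0 B.length :=
      slice_append_right A (B ++ C) 0 B.length
    simpa [Slice, take_left] using this

lemma occ_S_low (k : ℕ) : Occ0 (F (k + 3)) (S k) ((S (k + 1)).tail.length) := by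
  rw [decomp k, append_assoc ((S (k+1)).tail ++ S k)]
  have := occ0_middle ((S (k + 1)).tail) (S k) (S (k + 1) ++ [e (k + 1)])
  simpa [append_assoc] using this

lemma occ_S_high (k : ℕ) :
    Occ0 (F (k + 3)) (S (k + 1)) ((S (k + 1)).tail.length + fib k) := by
  rw [decomp k]
  have := occ0_middle ((S (k + 1)).tail ++ S k) (S (k + 1)) [e (k + 1)]
  simpa [append_assoc, lenS] using this

lemma fib_facts (k : ℕ) : fib (k+2) = fib (k+1) + fib k ∧ fib (k+3) = fib (k+2) + fib (k+1) ∧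
    fib (k+4) = fib (k+3) + fib (k+2) ∧ fib (k+5) = fib (k+4) + fib (k+3) ∧
    fib (k+6) = fib (k+5) + fib (k+4) ∧ 1 ≤ fib k ∧ 1 ≤ fib (k+1) :=
  ⟨rfl, rfl, rfl, rfl, rfl, fib_pos k, fib_pos (k+1)⟩

lemma F4eq (k : ℕ) : F (k+4) = F (k+3) ++ F (k+2) := rfl
lemma F5eq (k : ℕ) : F (k+5) = F (k+4) ++ F (k+3) := rfl
lemma F6eq (k : ℕ) : F (k+6) = F (k+5) ++ F (k+4) := rfl

lemma shift5 (k p ℓ : ℕ) (h : p + ℓ + fib (k+3) + 2 ≤ fib (k+5)) :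
    Slice (F (k+5)) p ℓ = Slice (F (k+5)) (p + fib (k+3)) ℓ := shift (k+3) p ℓ h

lemma shift6 (k p ℓ : ℕ) (h : p + ℓ + fib (k+4) + 2 ≤ fib (k+6)) :
    Slice (F (k+6)) p ℓ = Slice (F (k+6)) (p + fib (k+4)) ℓ := shift (k+4) p ℓ h

lemma M (k p ℓ : ℕ) (hb : p + ℓ ≤ fib (k + 5))
    (h1 : ¬ (p + 1 ≤ fib (k + 3) ∧ fib (k + 4) ≤ p + ℓ + 1))
    (h2 : ¬ (p + 1 ≤ fib (k + 4) ∧ fib (k + 5) ≤ p + ℓ + 1)) :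
    ∃ q, q ≠ p ∧ Occ0 (F (k + 5)) (Slice (F (k + 5)) p ℓ) q := by
  obtain ⟨E2, E3, E4, E5, E6, P0, P1⟩ := fib_facts k
  by_cases ca : p + ℓ + 2 ≤ fib (k + 4)
  · refine ⟨p + fib (k + 3), by omega, ?_⟩
    rw [shift5 k p ℓ (by omega)]
    exact occ0_of_slice (by rw [lenF]; omega)
  by_cases cb : fib (k + 4) ≤ p
  · obtain ⟨q, rfl⟩ : ∃ q, p = fib (k + 4) + q := ⟨p - fib (k + 4), by omega⟩
    refine ⟨q, by omega, ?_⟩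
    have s1 : Slice (F (k + 5)) (fib (k + 4) + q) ℓ = Slice (F (k + 3)) q ℓ := by
      rw [F5eq k, show fib (k + 4) + q = (F (k + 4)).length + q from by rw [lenF]]
      exact slice_append_right _ _ _ _
    have s2 : Slice (F (k + 5)) q ℓ = Slice (F (k + 3)) q ℓ := by
      rw [F5eq k, slice_append_left _ _ _ _ (by rw [lenF]; omega), F4eq k,
        slice_append_left _ _ _ _ (by rw [lenF]; omega)]
    rw [s1, ← s2]
    exact occ0_of_slice (by rw [lenF]; omega)
  by_cases cc : fib (k + 3) ≤ p ∧ p + ℓ + 2 ≤ fib (k + 5)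
  · refine ⟨p - fib (k + 3), by omega, ?_⟩
    have hs := shift5 k (p - fib (k + 3)) ℓ (by omega)
    rw [show p - fib (k + 3) + fib (k + 3) = p from by omega] at hs
    rw [← hs]
    exact occ0_of_slice (by rw [lenF]; omega)
  exfalso
  omega

lemma S_not_in (k : ℕ) (hU1 : ∀ p, Occ0 (F (k + 5)) (S (k + 2)) p → p + 1 = fib (k + 3)) :
    ∀ p, ¬ Occ0 (F (k + 5)) (S (k + 4)) p := by
  intro p h
  obtain ⟨E2, E3, E4, E5, E6, P0, P1⟩ := fib_facts k
  rw [show S (k + 4) = (S (k + 2) ++ S (k + 1)) ++ S (k + 2) from by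
    rw [show S (k + 4) = S (k + 2) ++ S (k + 1) ++ S (k + 2) from rfl]] at h
  have ha := occ0_left (occ0_left h)
  have hc := occ0_right h
  have r1 := hU1 p ha
  have r2 := hU1 _ hc
  rw [length_append, lenS, lenS] at r2
  omega

lemma U : ∀ k, (∀ p, Occ0 (F (k + 5)) (S (k + 2)) p → p + 1 = fib (k + 3)) ∧
    (∀ p, Occ0 (F (k + 5)) (S (k + 3)) p → p + 1 = fib (k + 4))
  | 0 => by
      constructor
      · intro p h
        have hb := h.1
        rw [show (S 2).length = 2 from rfl, show (F 5).length = 8 from rfl] at hb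
        have hb2 : p ≤ 6 := by omega
        interval_cases p <;> revert h <;> decide
      · intro p h
        have hb := h.1
        rw [show (S 3).length = 3 from rfl, show (F 5).length = 8 from rfl] at hb
        have hb2 : p ≤ 5 := by omega
        interval_cases p <;> revert h <;> decide
  | k + 1 => by
      obtain ⟨U1, U2⟩ := U k
      obtain ⟨E2, E3, E4, E5, E6, P0, P1⟩ := fib_facts k
      have NI : ∀ p, ¬ Occ0 (F (k + 5)) (S (k + 4)) p := S_not_in k U1
      have lenS3 : (S (k + 3)).length = fib (k + 3) := lenS _
      have lenS4 : (S (k + 4)).length = fib (k + 4) := lenS _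
      have PA : ∀ p, Occ0 (F (k + 6)) (S (k + 3)) p → p + 1 = fib (k + 4) := by
        intro p h
        have hb := h.1; rw [lenS3, lenF] at hb
        have hsl : Slice (F (k + 6)) p (fib (k + 3)) = S (k + 3) := by
          have h5 := h.2; rw [lenS3] at h5; exact h5
        by_cases c1 : p + fib (k + 3) ≤ fib (k + 5)
        · refine U2 p (occ0_restrict (show Occ0 (F (k+5) ++ F (k+4)) (S (k+3)) p from by
            rw [← F6eq k]; exact h) (by rw [lenS3, lenF]; omega))
        by_cases c2 : fib (k + 5) ≤ p
        · exfalso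
          obtain ⟨q, rfl⟩ : ∃ q, p = fib (k + 5) + q := ⟨p - fib (k + 5), by omega⟩
          have s1 : Slice (F (k + 6)) (fib (k + 5) + q) (fib (k + 3))
              = Slice (F (k + 4)) q (fib (k + 3)) := by
            rw [F6eq k, show fib (k + 5) + q = (F (k + 5)).length + q from by rw [lenF]]
            exact slice_append_right _ _ _ _
          have hocc : Occ0 (F (k + 5)) (S (k + 3)) q := by
            refine occ0_mono_prefix ?_ ⟨F (k + 3), (F5eq k).symm⟩
            exact ⟨by rw [lenS3, lenF]; omega, by rw [lenS3, ← s1, hsl]⟩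
          have r := U2 _ hocc
          have hb2 := hocc.1
          rw [lenS3, lenF] at hb2
          omega
        · push_neg at c1 c2
          have hs := shift6 k (p - fib (k + 4)) (fib (k + 3)) (by omega)
          rw [show p - fib (k + 4) + fib (k + 4) = p from by omega] at hs
          have hocc : Occ0 (F (k + 5)) (S (k + 3)) (p - fib (k + 4)) := by
            refine occ0_restrict (B := F (k + 4)) ?_ (by rw [lenS3, lenF]; omega)
            refine ⟨by rw [lenS3]; simp only [length_append, lenF]; omega, ?_⟩
            rw [lenS3, show F (k+5) ++ F (k+4) = F (k+6) from (F6eq k).symm, hs, hsl]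
          have r := U2 _ hocc
          omega
      refine ⟨PA, ?_⟩
      show ∀ p, Occ0 (F (k + 6)) (S (k + 4)) p → p + 1 = fib (k + 5)
      intro p h
      have hb := h.1; rw [lenS4, lenF] at hb
      have hsl : Slice (F (k + 6)) p (fib (k + 4)) = S (k + 4) := by
        have h5 := h.2; rw [lenS4] at h5; exact h5
      by_cases c1 : p + fib (k + 4) ≤ fib (k + 5)
      · exact absurd (occ0_restrict (show Occ0 (F (k+5) ++ F (k+4)) (S (k+4)) p from by
          rw [← F6eq k]; exact h) (by rw [lenS4, lenF]; omega)) (NI p)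
      by_cases c2 : fib (k + 5) ≤ p
      · exfalso
        have hp : p = fib (k + 5) := by omega
        have heq : S (k + 4) = F (k + 4) := by
          rw [← hsl, hp, F6eq k, show fib (k+5) = (F (k+5)).length + 0 from by rw [lenF]; omega,
            slice_append_right]
          unfold Slice
          rw [drop_zero, ← lenF (k + 4), take_length]
        exact S_ne_F (k + 2) heq
      push_neg at c1 c2
      by_cases c3 : fib (k + 4) ≤ p ∧ p + fib (k + 4) + 2 ≤ fib (k + 6)
      · exfalso
        have hs := shift6 k (p - fib (k + 4)) (fib (k + 4)) (by omega)
        rw [show p - fib (k + 4) + fib (k + 4) = p from by omega] at hs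
        have hocc : Occ0 (F (k + 5)) (S (k + 4)) (p - fib (k + 4)) := by
          refine occ0_restrict (B := F (k + 4)) ?_ (by rw [lenS4, lenF]; omega)
          refine ⟨by rw [lenS4]; simp only [length_append, lenF]; omega, ?_⟩
          rw [lenS4, show F (k+5) ++ F (k+4) = F (k+6) from (F6eq k).symm, hs, hsl]
        exact NI _ hocc
      by_cases c4 : fib (k + 6) ≤ p + fib (k + 4) + 1
      · omega
      · exfalso
        push_neg at c4
        have hp4 : p + 1 ≤ fib (k + 4) := by
          by_cases hx : fib (k + 4) ≤ p
          · exfalso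
            have := c3
            omega
          · omega
        have ht3 : (S (k + 4)).tail.length + 1 = fib (k + 4) := tail_S_len (k + 4)
        set t3 := (S (k + 4)).tail.length with ht3d
        have hlow : Occ0 (F (k + 6)) (S (k + 3)) t3 := occ_S_low (k + 3)
        have hhigh : Occ0 (F (k + 6)) (S (k + 4)) (t3 + fib (k + 3)) := occ_S_high (k + 3)
        have hsl2 : Slice (S (k + 4)) (t3 - p) (fib (k + 3)) = S (k + 3) := by
          rw [← hsl, slice_slice _ _ _ _ _ (by omega),
            show p + (t3 - p) = t3 from by omega]
          have h5 := hlow.2; rw [lenS3] at h5; exact h5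
        have hocc2 := occ0_sub hhigh (t3 - p) (fib (k + 3))
          (by rw [lenS4]; omega)
        rw [hsl2] at hocc2
        have hfin := PA _ hocc2
        omega

end MUSAux

open MUSAux

/-- For every n ≥ 5, the MUSs of F_n are exactly S_{n-3} and S_{n-2};
their unique occurrences are F_n[f_{n-2} .. f_{n-1} − 1] = S_{n-3} and
F_n[f_{n-1} .. f_n − 1] = S_{n-2}. -/
theorem fib_word_mus_characterization :
    ∀ n : ℕ, 5 ≤ n →
      (∀ w : List Bool, IsMUS (F n) w ↔ (w = S (n - 3) ∨ w = S (n - 2))) ∧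
      OccursAt (F n) (S (n - 3)) (fib (n - 2)) ∧
      fib (n - 2) + (S (n - 3)).length = fib (n - 1) ∧
      OccursAt (F n) (S (n - 2)) (fib (n - 1)) ∧
      fib (n - 1) + (S (n - 2)).length = fib n := by
  intro n hn
  obtain ⟨k, rfl⟩ : ∃ k, n = k + 5 := ⟨n - 5, by omega⟩
  rw [show k + 5 - 3 = k + 2 from by omega, show k + 5 - 2 = k + 3 from by omega,
      show k + 5 - 1 = k + 4 from by omega]
  obtain ⟨E2, E3, E4, E5, E6, P0, P1⟩ := fib_facts k
  obtain ⟨U1, U2⟩ := U k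
  have lenS2 : (S (k + 2)).length = fib (k + 2) := lenS _
  have lenS3 : (S (k + 3)).length = fib (k + 3) := lenS _
  have ht : (S (k + 3)).tail.length + 1 = fib (k + 3) := tail_S_len (k + 3)
  set t := (S (k + 3)).tail.length with htd
  have hA : Occ0 (F (k + 5)) (S (k + 2)) t := occ_S_low (k + 2)
  have hB : Occ0 (F (k + 5)) (S (k + 3)) (t + fib (k + 2)) := occ_S_high (k + 2)
  have hOA : OccursAt (F (k + 5)) (S (k + 2)) (fib (k + 3)) := by
    have h9 := occ0_occursAt hA
    rwa [show t + 1 = fib (k + 3) from ht] at h9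
  have hOB : OccursAt (F (k + 5)) (S (k + 3)) (fib (k + 4)) := by
    have h9 := occ0_occursAt hB
    rwa [show t + fib (k + 2) + 1 = fib (k + 4) from by omega] at h9
  refine ⟨?_, hOA, by rw [lenS2]; omega, hOB, by rw [lenS3]; omega⟩
  intro w
  constructor
  · rintro ⟨⟨i0, hocc, huniq⟩, hmin⟩
    have hwz : w ≠ [] := by
      rintro rfl
      have o1 : OccursAt (F (k + 5)) ([] : List Bool) 1 := ⟨by omega, by simp, rfl⟩
      have o2 : OccursAt (F (k + 5)) ([] : List Bool) 2 :=
        ⟨by omega, by rw [List.length_nil, lenF]; omega, rfl⟩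
      have e1 := huniq 1 o1
      have e2 := huniq 2 o2
      omega
    have hwlen : 1 ≤ w.length := by
      rcases Nat.eq_zero_or_pos w.length with h0 | h1
      · exact absurd (List.length_eq_zero_iff.mp h0) hwz
      · exact h1
    have h1le : 1 ≤ i0 := hocc.1
    obtain ⟨p0, rfl⟩ : ∃ p0, i0 = p0 + 1 := ⟨i0 - 1, by omega⟩
    have hoc0 : Occ0 (F (k + 5)) w p0 := occursAt_occ0 hocc
    have hb0 := hoc0.1
    rw [lenF] at hb0
    have hsl0 : Slice (F (k + 5)) p0 w.length = w := hoc0.2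
    have huniq0 : ∀ q, Occ0 (F (k + 5)) w q → q = p0 := by
      intro q hq
      have h9 := huniq (q + 1) (occ0_occursAt hq)
      omega
    by_cases hc1 : p0 + 1 ≤ fib (k + 3) ∧ fib (k + 4) ≤ p0 + w.length + 1
    · left
      by_contra hne
      have hd : Slice w (t - p0) (fib (k + 2)) = S (k + 2) := by
        rw [← hsl0, slice_slice _ _ _ _ _ (by omega),
          show p0 + (t - p0) = t from by omega]
        have h5 := hA.2; rw [lenS2] at h5; exact h5
      have hinf : S (k + 2) <:+: w := by rw [← hd]; exact slice_is_infix _ _ _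
      obtain ⟨i, j, hij, hi, hj⟩ := hmin (S (k + 2)) hinf (fun hh => hne hh.symm)
      have r1 := U1 _ (occursAt_occ0 hi)
      have r2 := U1 _ (occursAt_occ0 hj)
      have g1 : 1 ≤ i := hi.1
      have g2 : 1 ≤ j := hj.1
      omega
    by_cases hc2 : p0 + 1 ≤ fib (k + 4) ∧ fib (k + 5) ≤ p0 + w.length + 1
    · right
      by_contra hne
      have hd : Slice w (t + fib (k + 2) - p0) (fib (k + 3)) = S (k + 3) := by
        rw [← hsl0, slice_slice _ _ _ _ _ (by omega),
          show p0 + (t + fib (k + 2) - p0) = t + fib (k + 2) from by omega]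
        have h5 := hB.2; rw [lenS3] at h5; exact h5
      have hinf : S (k + 3) <:+: w := by rw [← hd]; exact slice_is_infix _ _ _
      obtain ⟨i, j, hij, hi, hj⟩ := hmin (S (k + 3)) hinf (fun hh => hne hh.symm)
      have r1 := U2 _ (occursAt_occ0 hi)
      have r2 := U2 _ (occursAt_occ0 hj)
      have g1 : 1 ≤ i := hi.1
      have g2 : 1 ≤ j := hj.1
      omega
    · obtain ⟨q, hqne, hocq⟩ := M k p0 w.length hb0 hc1 hc2
      rw [hsl0] at hocq
      exact absurd (huniq0 q hocq) hqne
  · rintro (rfl | rfl)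
    · refine ⟨⟨fib (k + 3), hOA, ?_⟩, ?_⟩
      · intro y hy
        have r := U1 _ (occursAt_occ0 hy)
        have g1 : 1 ≤ y := hy.1
        omega
      · intro v hv hne
        obtain ⟨d, hd, hdsl⟩ := infix_exists_slice hv
        have hd2 : d + v.length ≤ fib (k + 2) := by rw [← lenS2]; exact hd
        have hvlen : v.length < fib (k + 2) := by
          rcases lt_or_eq_of_le (List.IsInfix.length_le hv) with hlt | heq
          · rw [lenS2] at hlt; exact hlt
          · exact absurd (List.IsInfix.eq_of_length hv heq) hne
        have hov : Occ0 (F (k + 5)) v (t + d) := by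
          have h6 := occ0_sub hA d v.length hd
          rwa [hdsl] at h6
        have hbv := hov.1
        rw [lenF] at hbv
        obtain ⟨q, hqne, hocq⟩ := M k (t + d) v.length hbv (by omega) (by omega)
        rw [hov.2] at hocq
        exact ⟨q + 1, t + d + 1, by omega, occ0_occursAt hocq, occ0_occursAt hov⟩
    · refine ⟨⟨fib (k + 4), hOB, ?_⟩, ?_⟩
      · intro y hy
        have r := U2 _ (occursAt_occ0 hy)
        have g1 : 1 ≤ y := hy.1
        omega
      · intro v hv hne
        obtain ⟨d, hd, hdsl⟩ := infix_exists_slice hv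
        have hd2 : d + v.length ≤ fib (k + 3) := by rw [← lenS3]; exact hd
        have hvlen : v.length < fib (k + 3) := by
          rcases lt_or_eq_of_le (List.IsInfix.length_le hv) with hlt | heq
          · rw [lenS3] at hlt; exact hlt
          · exact absurd (List.IsInfix.eq_of_length hv heq) hne
        have hov : Occ0 (F (k + 5)) v (t + fib (k + 2) + d) := by
          have h6 := occ0_sub hB d v.length hd
          rwa [hdsl] at h6
        have hbv := hov.1
        rw [lenF] at hbv
        obtain ⟨q, hqne, hocq⟩ := M k (t + fib (k + 2) + d) v.length hbv (by omega) (by omega)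
        rw [hov.2] at hocq
        exact ⟨q + 1, t + fib (k + 2) + d + 1, by omega, occ0_occursAt hocq, occ0_occursAt hov⟩
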